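/- Let C be a category with object A satisfying the Galois assumptions (every arrow strictly epi, A maps onto every object, Hom(A,-) preserves strict epis). Then every arrow x : A → X exhibits X as the categorical quotient of A by the subgroup Fix(x) ⊆ Aut(A): for any arrow y : A → Y invariant under Fix(x) (i.e., y∘h = y for all h ∈ Fix(x)), there is a unique f : X → Y with f∘x = y. -/

import Mathlib

/-!
Since `Hom(A, -)` preserves strict epimorphisms and every arrow is one, precomposition with any
`e : A ⟶ A` is surjective on `A ⟶ A`, so `e` has a section; hence every endomorphism of `A` is an
automorphism. Now let `s t : W ⟶ X` with `s ≫ x = t ≫ x` and pick `a : A ⟶ W`. The automorphism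
`inv (a ≫ t) ≫ a ≫ s` fixes `x`, hence fixes `y`, giving `a ≫ s ≫ y = a ≫ t ≫ y`; cancelling the
epimorphism `a` shows that `y` coequalizes the kernel pair of `x`, so it factors uniquely through
the strict epimorphism `x`.
-/

open CategoryTheory

universe v u

/-- Grothendieck strict epimorphism. -/
def IsStrictEpi {C : Type u} [Category.{v} C] {X Y : C} (f : X ⟶ Y) : Prop :=
  ∀ {Z : C} (g : X ⟶ Z),
    (∀ {W : C} (s t : W ⟶ X), s ≫ f = t ≫ f → s ≫ g = t ≫ g) →
    ∃! h : Y ⟶ Z, f ≫ h = g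

theorem IsStrictEpi.epi {C : Type u} [Category.{v} C] {X Y : C} {f : X ⟶ Y}
    (hf : IsStrictEpi f) : Epi f where
  left_cancellation {Z} g g' hgg' := by
    obtain ⟨_, _, huniq⟩ := hf (f ≫ g) fun s t hst => by rw [reassoc_of% hst]
    rw [huniq g rfl, huniq g' hgg'.symm]

theorem IsStrictEpi.surjective {X Y : Type v} {f : X ⟶ Y} (hf : IsStrictEpi f) :
    Function.Surjective f :=
  (epi_iff_surjective f).mp hf.epi

section

variable {C : Type u} [Category.{v} C] {A : C}

theorem isIso_of_forall_exists_section (hsect : ∀ e : A ⟶ A, ∃ r, r ≫ e = 𝟙 A) (e : A ⟶ A) :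
    IsIso e := by
  obtain ⟨r, hr⟩ := hsect e
  obtain ⟨r', hr'⟩ := hsect r
  have he : e = r' := by
    calc e = (r' ≫ r) ≫ e := by rw [hr', Category.id_comp]
      _ = r' := by rw [Category.assoc, hr, Category.comp_id]
  exact ⟨r, by rw [he, hr'], hr⟩

theorem comp_eq_comp_of_fix_invariant {X Y : C} {x : A ⟶ X} {y : A ⟶ Y}
    (hinv : ∀ h : A ≅ A, h.hom ≫ x = x → h.hom ≫ y = y)
    {u v : A ⟶ A} [IsIso u] [IsIso v] (huv : u ≫ x = v ≫ x) : u ≫ y = v ≫ y := by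
  have hx : (asIso (inv v ≫ u)).hom ≫ x = x := by simp [huv]
  have hy : (inv v ≫ u) ≫ y = y := hinv _ hx
  calc u ≫ y = v ≫ (inv v ≫ u) ≫ y := by simp
    _ = v ≫ y := by rw [hy]

end

/-- Every arrow `x : A ⟶ X` is the categorical quotient of `A` by `Fix(x) ⊆ Aut(A)`:
every `y : A ⟶ Y` invariant under `Fix(x)` factors uniquely through `x`. -/
theorem stmt4 {C : Type u} [Category.{v} C] (A : C)
    (h1 : ∀ {X Y : C} (f : X ⟶ Y), IsStrictEpi f)
    (h2 : ∀ X : C, Nonempty (A ⟶ X))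
    (h3 : ∀ {X Y : C} (f : X ⟶ Y), IsStrictEpi f →
      IsStrictEpi (C := Type v) (X := A ⟶ X) (Y := A ⟶ Y) (TypeCat.ofHom (fun g : A ⟶ X => g ≫ f))) :
    ∀ (X Y : C) (x : A ⟶ X) (y : A ⟶ Y),
      (∀ h : A ≅ A, h.hom ≫ x = x → h.hom ≫ y = y) →
      ∃! f : X ⟶ Y, x ≫ f = y := by
  have hendIso : ∀ e : A ⟶ A, IsIso e :=
    isIso_of_forall_exists_section fun e => IsStrictEpi.surjective (h3 e (h1 e)) (𝟙 A)
  intro X Y x y hinv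
  refine h1 x y fun {W} s t hst => ?_
  obtain ⟨a⟩ := h2 W
  have : Epi a := IsStrictEpi.epi (h1 a)
  have := hendIso (a ≫ s)
  have := hendIso (a ≫ t)
  have hsty := comp_eq_comp_of_fix_invariant hinv (u := a ≫ s) (v := a ≫ t) (by simp [hst])
  exact (cancel_epi a).mp (by simpa using hsty)
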